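/- Let L be a CY-type operator of degree n+1 with all exponents 0 at z=0 and flag y_k = Σ_{j≤k} ln(z)^j f_{k−j}/j! with f_0(0)=1, f_1,…,f_n ∈ z·ℚ⟦z⟧. If the first Y-invariant condition Y₁ = 1 holds, i.e. ϑ( ϑ(y₂/y₀) / ϑ(y₁/y₀) ) = ϑ(y₁/y₀), then y₀·y₂ − (1/2)·y₁² = 0. -/

import Mathlib

open Polynomial

/-- The Euler operator `ϑ = z d/dz` on `ℚ⟦z⟧`. -/
noncomputable def thetaPS (g : PowerSeries ℚ) : PowerSeries ℚ :=
  PowerSeries.mk fun m => (m : ℚ) * PowerSeries.coeff m g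

/-- The Euler operator `ϑ = z d/dz` on `ℚ⟦z⟧[ln z]` (polynomials in `X = ln z` over
`ℚ⟦z⟧`), acting by `ϑ(g (ln z)^j) = ϑ(g)(ln z)^j + j g (ln z)^{j-1}`. -/
noncomputable def thetaL (p : Polynomial (PowerSeries ℚ)) : Polynomial (PowerSeries ℚ) :=
  ∑ j ∈ Finset.range (p.natDegree + 1),
    (Polynomial.C (thetaPS (p.coeff j)) * Polynomial.X ^ j +
      Polynomial.C ((j : ℚ) • p.coeff j) * Polynomial.X ^ (j - 1))

/-- The flag `y_k = Σ_{j=0}^k (1/j!) (ln z)^j f_{k−j}` in `ℚ⟦z⟧[ln z]`. -/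
noncomputable def flag (f : ℕ → PowerSeries ℚ) (k : ℕ) : Polynomial (PowerSeries ℚ) :=
  ∑ j ∈ Finset.range (k + 1),
    ((j.factorial : ℚ)⁻¹) • (Polynomial.C (f (k - j)) * Polynomial.X ^ j)

/-! With `u = y₁/y₀` and `v = y₂/y₀` in the fraction field, `Y₁ = 1` reads `ϑ(ϑv/ϑu) = ϑu`.
Write `v = u²/2 + c`: the `ln z` terms cancel in `c = (y₀y₂ − y₁²/2)/y₀²`, which is the power series
`(f₀f₂ − f₁²/2)/f₀²`, and the condition becomes `ϑ(ϑc/ϑu) = 0`. Since `ϑu = 1 + ϑ(f₁/f₀)` is a unit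
of `ℚ⟦z⟧`, `ϑc/ϑu` is a power series killed by `ϑ` without constant term, hence `0`; so `ϑc = 0`,
and `c = 0` because `c(0) = 0`. -/

lemma thetaPS_zero : thetaPS 0 = 0 := by
  ext n; simp [thetaPS]

lemma thetaPS_one : thetaPS 1 = 0 := by
  ext n; simp [thetaPS, PowerSeries.coeff_one]

lemma constantCoeff_thetaPS (g : PowerSeries ℚ) : PowerSeries.constantCoeff (thetaPS g) = 0 := by
  rw [← PowerSeries.coeff_zero_eq_constantCoeff_apply]
  simp [thetaPS]

lemma eq_zero_of_thetaPS_eq_zero {g : PowerSeries ℚ} (h : thetaPS g = 0)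
    (h0 : PowerSeries.constantCoeff g = 0) : g = 0 := by
  ext (_ | n)
  · simpa using h0
  · simpa [thetaPS, Nat.cast_add_one_ne_zero] using congrArg (PowerSeries.coeff (n + 1)) h

lemma thetaL_C (a : PowerSeries ℚ) : thetaL (C a) = C (thetaPS a) := by
  simp [thetaL]

lemma thetaL_X : thetaL (X : (PowerSeries ℚ)[X]) = 1 := by
  simp [thetaL, Finset.sum_range_succ, thetaPS_zero, thetaPS_one]

lemma flag_zero (f : ℕ → PowerSeries ℚ) : flag f 0 = C (f 0) := by
  simp [flag]

lemma flag_one (f : ℕ → PowerSeries ℚ) : flag f 1 = C (f 1) + C (f 0) * X := by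
  simp [flag, Finset.sum_range_succ]

lemma flag_two (f : ℕ → PowerSeries ℚ) :
    flag f 2 = C (f 2) + C (f 1) * X + (2 : ℚ)⁻¹ • (C (f 0) * X ^ 2) := by
  simp [flag, Finset.sum_range_succ, Nat.factorial]

lemma flag_zero_mul_flag_two_sub (f : ℕ → PowerSeries ℚ) :
    flag f 0 * flag f 2 - (2 : ℚ)⁻¹ • flag f 1 ^ 2 = C (f 0 * f 2 - (2 : ℚ)⁻¹ • f 1 ^ 2) := by
  have h2 : algebraMap ℚ (PowerSeries ℚ)[X] 2⁻¹ * 2 = 1 := by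
    rw [← map_ofNat (algebraMap ℚ (PowerSeries ℚ)[X]) 2, ← map_mul, inv_mul_cancel₀ two_ne_zero,
      map_one]
  rw [flag_zero, flag_one, flag_two]
  simp only [Algebra.smul_def, map_sub, map_mul, map_pow, ← Polynomial.algebraMap_apply]
  linear_combination (-(C (f 0) * C (f 1) * X)) * h2

def Derivation.ofLeibniz {A : Type*} [CommRing A] (D : A → A) (hadd : ∀ x y, D (x + y) = D x + D y)
    (hmul : ∀ x y, D (x * y) = x * D y + D x * y) : Derivation ℤ A A :=
  Derivation.mk' (AddMonoidHom.mk' D hadd).toIntLinearMap fun x y => by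
    rw [smul_eq_mul, smul_eq_mul, mul_comm y]
    exact hmul x y

theorem Derivation.map_div_map_eq_zero_of_sq_div_two_add {K : Type*} [Field K] [NeZero (2 : K)]
    (d : Derivation ℤ K K) {u c : K} (hu : d u ≠ 0)
    (h : d (d (u ^ 2 / 2 + c) / d u) = d u) : d (d c / d u) = 0 := by
  have hd2 : d 2 = 0 := by simpa using d.map_natCast 2
  have hquot : d (u ^ 2 / 2 + c) / d u = u + d c / d u := by
    rw [map_add, d.leibniz_div_const _ _ hd2, d.leibniz_pow]
    simp only [smul_eq_mul, nsmul_eq_mul]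
    field_simp
    ring
  rwa [hquot, map_add, add_eq_left] at h

section FractionField

variable {K : Type*} [Field K] [Algebra (PowerSeries ℚ)[X] K] [FaithfulSMul (PowerSeries ℚ)[X] K]

omit [FaithfulSMul (PowerSeries ℚ)[X] K] in
lemma charZero_of_algebra_polynomial_powerSeries : CharZero K :=
  charZero_of_injective_ringHom ((algebraMap (PowerSeries ℚ)[X] K).comp (algebraMap ℚ _)).injective

lemma algebraMap_C_ne_zero {b : PowerSeries ℚ} (hb : PowerSeries.constantCoeff b ≠ 0) :
    algebraMap _ K (C b) ≠ 0 := by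
  rw [ne_eq, FaithfulSMul.algebraMap_eq_zero_iff, C_eq_zero]
  rintro rfl
  simp at hb

lemma algebraMap_C_div_algebraMap_C (a : PowerSeries ℚ) {b : PowerSeries ℚ}
    (hb : PowerSeries.constantCoeff b ≠ 0) :
    algebraMap _ K (C a) / algebraMap _ K (C b) = algebraMap _ K (C (a * b⁻¹)) := by
  rw [div_eq_iff (algebraMap_C_ne_zero hb), ← map_mul, ← C_mul, mul_assoc,
    PowerSeries.inv_mul_cancel _ hb, mul_one]

lemma algebraMap_flag_one_div (f : ℕ → PowerSeries ℚ) (hf0 : PowerSeries.constantCoeff (f 0) ≠ 0) :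
    algebraMap _ K (flag f 1) / algebraMap _ K (flag f 0) =
      algebraMap _ K (X + C (f 1 * (f 0)⁻¹)) := by
  rw [flag_one, flag_zero, map_add, add_div, algebraMap_C_div_algebraMap_C _ hf0,
    map_mul (algebraMap _ K) (C (f 0)), mul_div_cancel_left₀ _ (algebraMap_C_ne_zero hf0),
    map_add, add_comm]

lemma algebraMap_flag_two_div (f : ℕ → PowerSeries ℚ) (hf0 : PowerSeries.constantCoeff (f 0) ≠ 0) :
    algebraMap _ K (flag f 2) / algebraMap _ K (flag f 0) =
      (algebraMap _ K (flag f 1) / algebraMap _ K (flag f 0)) ^ 2 / 2 +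
        algebraMap _ K (C ((f 0 * f 2 - (2 : ℚ)⁻¹ • f 1 ^ 2) * (f 0 ^ 2)⁻¹)) := by
  have := charZero_of_algebra_polynomial_powerSeries (K := K)
  have hy0 : algebraMap _ K (flag f 0) ≠ 0 := flag_zero f ▸ algebraMap_C_ne_zero hf0
  have hQ : algebraMap _ K (flag f 0) * algebraMap _ K (flag f 2) -
      algebraMap _ K (flag f 1) ^ 2 / 2 = algebraMap _ K (C (f 0 * f 2 - (2 : ℚ)⁻¹ • f 1 ^ 2)) := by
    rw [← flag_zero_mul_flag_two_sub, map_sub, map_mul, map_rat_smul, map_pow, Rat.smul_def]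
    push_cast
    ring
  rw [← algebraMap_C_div_algebraMap_C _ (by simpa using hf0), map_pow C, map_pow, ← flag_zero, ← hQ]
  field_simp
  ring

omit [FaithfulSMul (PowerSeries ℚ)[X] K] in
lemma map_algebraMap_X_add_C (d : Derivation ℤ K K)
    (hd : ∀ p, d (algebraMap _ K p) = algebraMap _ K (thetaL p)) (a : PowerSeries ℚ) :
    d (algebraMap _ K (X + C a)) = algebraMap _ K (C (1 + thetaPS a)) := by
  rw [map_add, map_add, hd, hd, thetaL_X, thetaL_C, map_one, C_add, C_1, map_add, map_one]

theorem eq_zero_of_Y1_eq_one (d : Derivation ℤ K K)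
    (hd : ∀ p, d (algebraMap _ K p) = algebraMap _ K (thetaL p)) (g h : PowerSeries ℚ)
    (hh : PowerSeries.constantCoeff h = 0)
    (hY : d (d (algebraMap _ K (X + C g) ^ 2 / 2 + algebraMap _ K (C h)) /
      d (algebraMap _ K (X + C g))) = d (algebraMap _ K (X + C g))) : h = 0 := by
  have := charZero_of_algebra_polynomial_powerSeries (K := K)
  have hv : PowerSeries.constantCoeff (1 + thetaPS g) ≠ 0 := by simp [constantCoeff_thetaPS]
  have hdu := map_algebraMap_X_add_C d hd g
  have hconst := d.map_div_map_eq_zero_of_sq_div_two_add (hdu ▸ algebraMap_C_ne_zero hv) hY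
  rw [hd, thetaL_C, hdu, algebraMap_C_div_algebraMap_C _ hv, hd, thetaL_C,
    FaithfulSMul.algebraMap_eq_zero_iff, C_eq_zero] at hconst
  have hθh := eq_zero_of_thetaPS_eq_zero hconst (by simp [constantCoeff_thetaPS])
  rw [mul_eq_zero, PowerSeries.inv_eq_zero, or_iff_left hv] at hθh
  exact eq_zero_of_thetaPS_eq_zero hθh hh

end FractionField

theorem Y1_eq_one_gives_quadratic_relation_general
    (f : ℕ → PowerSeries ℚ)
    (hf0 : PowerSeries.constantCoeff (f 0) = 1)
    (hf1 : PowerSeries.constantCoeff (f 1) = 0)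
    (hf2 : PowerSeries.constantCoeff (f 2) = 0)
    (D : FractionRing (Polynomial (PowerSeries ℚ)) →
         FractionRing (Polynomial (PowerSeries ℚ)))
    (hDadd : ∀ x y, D (x + y) = D x + D y)
    (hDmul : ∀ x y, D (x * y) = x * D y + D x * y)
    (hDext : ∀ p : Polynomial (PowerSeries ℚ),
      D (algebraMap (Polynomial (PowerSeries ℚ)) _ p) =
        algebraMap (Polynomial (PowerSeries ℚ)) _ (thetaL p))
    (hY : D (D (algebraMap (Polynomial (PowerSeries ℚ)) _ (flag f 2) /
                algebraMap (Polynomial (PowerSeries ℚ)) _ (flag f 0)) /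
             D (algebraMap (Polynomial (PowerSeries ℚ)) _ (flag f 1) /
                algebraMap (Polynomial (PowerSeries ℚ)) _ (flag f 0))) =
          D (algebraMap (Polynomial (PowerSeries ℚ)) _ (flag f 1) /
             algebraMap (Polynomial (PowerSeries ℚ)) _ (flag f 0))) :
    flag f 0 * flag f 2 - (2 : ℚ)⁻¹ • (flag f 1) ^ 2 = 0 := by
  have hf0' : PowerSeries.constantCoeff (f 0) ≠ 0 := by simp [hf0]
  rw [algebraMap_flag_two_div f hf0', algebraMap_flag_one_div f hf0'] at hY
  have hQ := eq_zero_of_Y1_eq_one (Derivation.ofLeibniz D hDadd hDmul) hDext _ _ (by simp [hf1, hf2]) hY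
  rw [mul_eq_zero, PowerSeries.inv_eq_zero, or_iff_left (by simpa using hf0')] at hQ
  rw [flag_zero_mul_flag_two_sub, hQ, C_0]

/-- Let `y_0, y_1, y_2` be a flag with all exponents `0` at `z = 0`
(`f_0(0) = 1`, `f_1, f_2 ∈ z ℚ⟦z⟧`).  If the first Y-invariant condition `Y₁ = 1`
holds, i.e. `ϑ(ϑ(y₂/y₀)/ϑ(y₁/y₀)) = ϑ(y₁/y₀)` (computed in the fraction field of
`ℚ⟦z⟧[ln z]`, with `D` the extension of `ϑ`), then `y₀·y₂ − (1/2)·y₁² = 0`. -/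
theorem Y1_eq_one_gives_quadratic_relation
    (f : ℕ → PowerSeries ℚ)
    (hf0u : IsUnit (f 0)) (hf0 : PowerSeries.constantCoeff (f 0) = 1)
    (hf1 : PowerSeries.constantCoeff (f 1) = 0)
    (hf2 : PowerSeries.constantCoeff (f 2) = 0)
    (D : FractionRing (Polynomial (PowerSeries ℚ)) →
         FractionRing (Polynomial (PowerSeries ℚ)))
    (hDadd : ∀ x y, D (x + y) = D x + D y)
    (hDmul : ∀ x y, D (x * y) = x * D y + D x * y)
    (hDext : ∀ p : Polynomial (PowerSeries ℚ),
      D (algebraMap (Polynomial (PowerSeries ℚ)) _ p) =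
        algebraMap (Polynomial (PowerSeries ℚ)) _ (thetaL p))
    (hY : D (D (algebraMap (Polynomial (PowerSeries ℚ)) _ (flag f 2) /
                algebraMap (Polynomial (PowerSeries ℚ)) _ (flag f 0)) /
             D (algebraMap (Polynomial (PowerSeries ℚ)) _ (flag f 1) /
                algebraMap (Polynomial (PowerSeries ℚ)) _ (flag f 0))) =
          D (algebraMap (Polynomial (PowerSeries ℚ)) _ (flag f 1) /
             algebraMap (Polynomial (PowerSeries ℚ)) _ (flag f 0))) :
    flag f 0 * flag f 2 - (2 : ℚ)⁻¹ • (flag f 1) ^ 2 = 0 :=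
  Y1_eq_one_gives_quadratic_relation_general f hf0 hf1 hf2 D hDadd hDmul hDext hY
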